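/- arXiv:2404.14517 — 3 statements merged into one kernel-verified Lean document; each statement's English description precedes it below -/
import Mathlib

section
/- Let k ∈ ℕ and let u, v be finite words over a finite alphabet Σ for which there exist finite words u', v' such that u·u' ≡FO_k v and u ≡FO_k v·v'. Then u ≡prefFO_k v, i.e. u and v satisfy the same prefFO sentences of quantifier depth at most k. -/
set_option maxHeartbeats 1000000

namespace PrefSynth

/-! ### Possibly infinite words -/

/-- A (finite or infinite) word over alphabet `A`: positions carrying `some` letter. -/
abbrev Word (A : Type) : Type := ℕ → Option A

/-- `m` is a position of the word `w`. -/
def Word.pos {A : Type} (w : Word A) (m : ℕ) : Prop := w m ≠ none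

/-- A genuine word: its domain is downward closed. -/
def Word.Closed {A : Type} (w : Word A) : Prop :=
  ∀ i j : ℕ, i ≤ j → w j ≠ none → w i ≠ none

/-- The finite word given by a list. -/
def Word.ofList {A : Type} (l : List A) : Word A := fun i => l[i]?

/-- The infinite word given by a function. -/
def Word.ofFun {A : Type} (u : ℕ → A) : Word A := fun i => some (u i)

/-- The prefix of a word consisting of its first `n` positions; `Word.take w (m+1)`
is `w[0…m]`. -/
def Word.take {A : Type} (w : Word A) (n : ℕ) : Word A :=
  fun i => if i < n then w i else none

/-- `u` is a prefix of `v`. -/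
def Word.IsPrefix {A : Type} (u v : Word A) : Prop :=
  ∀ i, u i ≠ none → v i = u i

/-! ### Prefix first-order logic on words

Formulas in context `n`: the free variables are `Fin n`; when `n ≥ 1`, the variable
`0` is the bounding variable `x̄`, all other variables are prefix variables, and
every quantifier is of the form `∃ x < x̄` (new variables are appended at the end,
i.e. interpreted through `Fin.snoc`). -/

inductive PFm (A : Type) : ℕ → Type where
  | eq {n} : Fin n → Fin n → PFm A n
  | lt {n} : Fin n → Fin n → PFm A n
  | letter {n} : A → Fin n → PFm A n
  | and {n} : PFm A n → PFm A n → PFm A n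
  | not {n} : PFm A n → PFm A n
  | exlt {n} : PFm A (n + 2) → PFm A (n + 1)

/-- Quantifier depth. -/
def PFm.depth {A : Type} : {n : ℕ} → PFm A n → ℕ
  | _, .eq _ _ => 0
  | _, .lt _ _ => 0
  | _, .letter _ _ => 0
  | _, .and φ ψ => max φ.depth ψ.depth
  | _, .not φ => φ.depth
  | _, .exlt φ => φ.depth + 1

/-- Satisfaction of a prefFO formula in a word, under an assignment of the
free variables to positions. -/
def PFm.Sat {A : Type} (w : Word A) : {n : ℕ} → PFm A n → (Fin n → ℕ) → Prop
  | _, .eq i j, ρ => ρ i = ρ j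
  | _, .lt i j, ρ => ρ i < ρ j
  | _, .letter a i, ρ => w (ρ i) = some a
  | _, .and φ ψ, ρ => PFm.Sat w φ ρ ∧ PFm.Sat w ψ ρ
  | _, .not φ, ρ => ¬ PFm.Sat w φ ρ
  | _, .exlt φ, ρ => ∃ m : ℕ, Word.pos w m ∧ m < ρ 0 ∧ PFm.Sat w φ (Fin.snoc ρ m)

/-- prefFO sentences: start by quantifying the bounding variable, and are closed
under boolean combinations. -/
inductive PSen (A : Type) : Type where
  | exB : PFm A 1 → PSen A
  | and : PSen A → PSen A → PSen A
  | not : PSen A → PSen A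

/-- Quantifier depth of a sentence. -/
def PSen.depth {A : Type} : PSen A → ℕ
  | .exB φ => φ.depth + 1
  | .and s t => max s.depth t.depth
  | .not s => s.depth

/-- Satisfaction of a prefFO sentence in a word. -/
def PSen.Sat {A : Type} (w : Word A) : PSen A → Prop
  | .exB φ => ∃ m : ℕ, Word.pos w m ∧ PFm.Sat w φ (fun _ => m)
  | .and s t => PSen.Sat w s ∧ PSen.Sat w t
  | .not s => ¬ PSen.Sat w s

/-- The prefFO `k`-type of a word: the set of prefFO sentences of quantifier
depth at most `k` it satisfies. -/
def tp {A : Type} (k : ℕ) (w : Word A) : Set (PSen A) :=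
  {s | PSen.depth s ≤ k ∧ PSen.Sat w s}

/-- `Types_k`: the set of prefFO `k`-types of finite words over `A`. -/
def WTypes (A : Type) (k : ℕ) : Set (Set (PSen A)) :=
  {T | ∃ l : List A, T = tp k (Word.ofList l)}

/-- The relation `⪯` on types: `τ ⪯ τ'` iff some finite word of type `τ` has an
extension of type `τ'`. -/
def typeLe {A : Type} (k : ℕ) (τ τ' : Set (PSen A)) : Prop :=
  ∃ u v : List A, tp k (Word.ofList u) = τ ∧ tp k (Word.ofList (u ++ v)) = τ'

/-- Two words agree on all prefFO sentences of quantifier depth at most `k`. -/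
def prefEquiv {A : Type} (k : ℕ) (w w' : Word A) : Prop :=
  ∀ s : PSen A, PSen.depth s ≤ k → (PSen.Sat w s ↔ PSen.Sat w' s)

/-! ### Full first-order logic on words -/

inductive FOFm (A : Type) : ℕ → Type where
  | eq {n} : Fin n → Fin n → FOFm A n
  | lt {n} : Fin n → Fin n → FOFm A n
  | letter {n} : A → Fin n → FOFm A n
  | and {n} : FOFm A n → FOFm A n → FOFm A n
  | not {n} : FOFm A n → FOFm A n
  | ex {n} : FOFm A (n + 1) → FOFm A n

def FOFm.depth {A : Type} : {n : ℕ} → FOFm A n → ℕ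
  | _, .eq _ _ => 0
  | _, .lt _ _ => 0
  | _, .letter _ _ => 0
  | _, .and φ ψ => max φ.depth ψ.depth
  | _, .not φ => φ.depth
  | _, .ex φ => φ.depth + 1

def FOFm.Sat {A : Type} (w : Word A) : {n : ℕ} → FOFm A n → (Fin n → ℕ) → Prop
  | _, .eq i j, ρ => ρ i = ρ j
  | _, .lt i j, ρ => ρ i < ρ j
  | _, .letter a i, ρ => w (ρ i) = some a
  | _, .and φ ψ, ρ => FOFm.Sat w φ ρ ∧ FOFm.Sat w ψ ρ
  | _, .not φ, ρ => ¬ FOFm.Sat w φ ρ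
  | _, .ex φ, ρ => ∃ m : ℕ, Word.pos w m ∧ FOFm.Sat w φ (Fin.snoc ρ m)

/-- Two words agree on all FO sentences of quantifier depth at most `k`. -/
def foEquiv {A : Type} (k : ℕ) (w w' : Word A) : Prop :=
  ∀ s : FOFm A 0, FOFm.depth s ≤ k →
    (FOFm.Sat w s Fin.elim0 ↔ FOFm.Sat w' s Fin.elim0)

/-! ### The prefix Ehrenfeucht–Fraïssé game on words

After the first (bounding) round, pebbles are kept as matched pairs of
positions: `(m, m')` with `m` in the first word and `m'` in the second. -/

/-- The agreement condition: the correspondence between pebbled positions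
preserves equality, the order `<` and the letters. -/
def AgreeW {A : Type} (u v : Word A) (L : List (ℕ × ℕ)) : Prop :=
  ∀ p ∈ L, ∀ q ∈ L,
    ((p.1 = q.1) ↔ (p.2 = q.2)) ∧ ((p.1 < q.1) ↔ (p.2 < q.2)) ∧
    (∀ a : A, u p.1 = some a ↔ v p.2 = some a)

/-- `DupWinW u v b b' r L`: with bounding pebbles placed on `b` (in `u`) and `b'`
(in `v`), and prefix pebbles `L` already placed, Duplicator wins the game with `r`
remaining rounds. -/
def DupWinW {A : Type} (u v : Word A) (b b' : ℕ) : ℕ → List (ℕ × ℕ) → Prop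
  | 0, L => AgreeW u v ((b, b') :: L)
  | r + 1, L => AgreeW u v ((b, b') :: L) ∧
      (∀ m, Word.pos u m → m < b →
        ∃ m', Word.pos v m' ∧ m' < b' ∧ DupWinW u v b b' r ((m, m') :: L)) ∧
      (∀ m', Word.pos v m' → m' < b' →
        ∃ m, Word.pos u m ∧ m < b ∧ DupWinW u v b b' r ((m, m') :: L))

/-! ### Data words -/

/-- A move of a data word: a System action together with a System process, or an
Environment action together with an Environment process. `A`, `B` are the System
and Environment alphabets; `P`, `Q` the System and Environment process sets. -/
abbrev DMove (A B P Q : Type) : Type := (A × P) ⊕ (B × Q)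

/-- The process of a move. -/
def dproc {A B P Q : Type} : DMove A B P Q → P ⊕ Q :=
  Sum.elim (fun ap => Sum.inl ap.2) (fun bq => Sum.inr bq.2)

/-- The action of a move. -/
def dact {A B P Q : Type} : DMove A B P Q → A ⊕ B :=
  Sum.elim (fun ap => Sum.inl ap.1) (fun bq => Sum.inr bq.1)

/-- The process acting at position `m` of a data word. -/
def procAt {A B P Q : Type} (d : Word (DMove A B P Q)) (m : ℕ) : Option (P ⊕ Q) :=
  (d m).map dproc

/-- The action taken at position `m` of a data word. -/
def actAt {A B P Q : Type} (d : Word (DMove A B P Q)) (m : ℕ) : Option (A ⊕ B) :=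
  (d m).map dact

/-- Elements of the structure associated with a data word: one process element
for every process, and one element for every position. -/
abbrev Elem (P Q : Type) : Type := (P ⊕ Q) ⊕ ℕ

/-- The `∼`-class (i.e. the process) of an element of a data word. -/
def classOfE {A B P Q : Type} (d : Word (DMove A B P Q)) : Elem P Q → Option (P ⊕ Q)
  | .inl q => some q
  | .inr m => procAt d m

/-! ### Prefix first-order logic on data words

`PDW A B p b x` : formulas in a context with `p` process variables, `b` bounding
variables and `x` prefix variables.  Sentences (possibly with constants, constants
being modelled as the initial free variables) are obtained by instantiating the
contexts. -/

/-- A variable of any of the three kinds. -/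
abbrev DVar (p b x : ℕ) : Type := Fin p ⊕ (Fin b ⊕ Fin x)

inductive PDW (A B : Type) : ℕ → ℕ → ℕ → Type where
  | eq {p b x} : DVar p b x → DVar p b x → PDW A B p b x
  | procS {p b x} : Fin p → PDW A B p b x
  | procE {p b x} : Fin p → PDW A B p b x
  | letter {p b x} : (A ⊕ B) → (Fin b ⊕ Fin x) → PDW A B p b x
  | lesim {p b x} : Fin x → Fin x → PDW A B p b x
  | sim {p b x} : Fin p → DVar p b x → PDW A B p b x
  | and {p b x} : PDW A B p b x → PDW A B p b x → PDW A B p b x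
  | not {p b x} : PDW A B p b x → PDW A B p b x
  | exP {p b x} : PDW A B (p + 1) b x → PDW A B p b x
  | exB {p b x} : PDW A B p (b + 1) x → PDW A B p b x
  | exX {p b x} : Fin b → PDW A B p b (x + 1) → PDW A B p b x

/-- Quantifier depth. -/
def PDW.depth {A B : Type} : {p b x : ℕ} → PDW A B p b x → ℕ
  | _, _, _, .eq _ _ => 0
  | _, _, _, .procS _ => 0
  | _, _, _, .procE _ => 0
  | _, _, _, .letter _ _ => 0
  | _, _, _, .lesim _ _ => 0
  | _, _, _, .sim _ _ => 0
  | _, _, _, .and φ ψ => max φ.depth ψ.depth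
  | _, _, _, .not φ => φ.depth
  | _, _, _, .exP φ => φ.depth + 1
  | _, _, _, .exB φ => φ.depth + 1
  | _, _, _, .exX _ φ => φ.depth + 1

/-- Interpretation of a variable as an element of the data-word structure. -/
def interpDVar {P Q : Type} {p b x : ℕ} (ρP : Fin p → P ⊕ Q) (ρB : Fin b → ℕ)
    (ρX : Fin x → ℕ) : DVar p b x → Elem P Q
  | .inl i => Sum.inl (ρP i)
  | .inr (.inl i) => Sum.inr (ρB i)
  | .inr (.inr i) => Sum.inr (ρX i)

/-- Satisfaction of a prefFO^dw formula in a data word, under assignments of the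
process, bounding and prefix variables.  New bounding variables must be positions
lying in a fresh class (w.r.t. all present bounding variables), new prefix
variables must be `≲` their associated bounding variable. -/
def PDW.Sat {A B P Q : Type} (d : Word (DMove A B P Q)) :
    {p b x : ℕ} → PDW A B p b x → (Fin p → P ⊕ Q) → (Fin b → ℕ) → (Fin x → ℕ) → Prop
  | _, _, _, .eq v w, ρP, ρB, ρX => interpDVar ρP ρB ρX v = interpDVar ρP ρB ρX w
  | _, _, _, .procS i, ρP, _, _ => ∃ q : P, ρP i = Sum.inl q
  | _, _, _, .procE i, ρP, _, _ => ∃ q : Q, ρP i = Sum.inr q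
  | _, _, _, .letter a v, _, ρB, ρX => actAt d (Sum.elim ρB ρX v) = some a
  | _, _, _, .lesim i j, _, _, ρX =>
      ρX i < ρX j ∧ ∃ q, procAt d (ρX i) = some q ∧ procAt d (ρX j) = some q
  | _, _, _, .sim i v, ρP, ρB, ρX => classOfE d (interpDVar ρP ρB ρX v) = some (ρP i)
  | _, _, _, .and φ ψ, ρP, ρB, ρX => PDW.Sat d φ ρP ρB ρX ∧ PDW.Sat d ψ ρP ρB ρX
  | _, _, _, .not φ, ρP, ρB, ρX => ¬ PDW.Sat d φ ρP ρB ρX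
  | _, _, _, .exP φ, ρP, ρB, ρX => ∃ q : P ⊕ Q, PDW.Sat d φ (Fin.snoc ρP q) ρB ρX
  | _, _, _, .exB φ, ρP, ρB, ρX => ∃ m : ℕ, d m ≠ none ∧
      (∀ j, procAt d m ≠ procAt d (ρB j)) ∧ PDW.Sat d φ ρP (Fin.snoc ρB m) ρX
  | _, _, _, .exX y φ, ρP, ρB, ρX => ∃ m : ℕ, d m ≠ none ∧ m < ρB y ∧
      procAt d m = procAt d (ρB y) ∧ PDW.Sat d φ ρP ρB (Fin.snoc ρX m)

/-- Satisfaction of a prefFO^dw sentence (no constants) in a data word. -/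
def SatS {A B P Q : Type} (d : Word (DMove A B P Q)) (φ : PDW A B 0 0 0) : Prop :=
  PDW.Sat d φ Fin.elim0 Fin.elim0 Fin.elim0

/-! ### Classes of a data word -/

/-- `m` is a position of process `q` in the data word `d`. -/
def isPosOf {A B P Q : Type} (d : Word (DMove A B P Q)) (q : P ⊕ Q) (m : ℕ) : Prop :=
  procAt d m = some q

open Classical in
/-- The class of process `q` in the data word `d`, as a (finite or infinite) word
over `A ⊕ B`: its `i`-th letter is the action taken at the `i`-th position of `q`. -/
noncomputable def classWord {A B P Q : Type} (d : Word (DMove A B P Q)) (q : P ⊕ Q) :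
    Word (A ⊕ B) :=
  fun i =>
    if {m | isPosOf d q m}.Infinite ∨ i < Set.ncard {m | isPosOf d q m}
    then actAt d (Nat.nth (isPosOf d q) i) else none

/-- The set of processes of `d` whose class has prefFO `k`-type `τ`. -/
def classesOfType {A B P Q : Type} (d : Word (DMove A B P Q)) (k : ℕ)
    (τ : Set (PSen (A ⊕ B))) : Set (P ⊕ Q) :=
  {q | tp k (classWord d q) = τ}

end PrefSynth
/-! ### The prefix Ehrenfeucht–Fraïssé game on data words (with constants) -/

namespace PrefSynth

/-- A pebble placed on a data word: a process pebble, a bounding pebble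
or a prefix pebble. -/
inductive Peb (P Q : Type) : Type where
  | proc : P ⊕ Q → Peb P Q
  | bound : ℕ → Peb P Q
  | pref : ℕ → Peb P Q

/-- The element on which a pebble is placed. -/
def Peb.elem {P Q : Type} : Peb P Q → Elem P Q
  | .proc q => Sum.inl q
  | .bound m => Sum.inr m
  | .pref m => Sum.inr m

/-- `e` is a System process element. -/
def IsProcSE {P Q : Type} (e : Elem P Q) : Prop := ∃ q : P, e = Sum.inl (Sum.inl q)

/-- `e` is an Environment process element. -/
def IsProcEE {P Q : Type} (e : Elem P Q) : Prop := ∃ q : Q, e = Sum.inl (Sum.inr q)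

/-- `e` is a position labelled by the letter `a`. -/
def LetterIsE {A B P Q : Type} (d : Word (DMove A B P Q)) (e : Elem P Q) (a : A ⊕ B) :
    Prop := ∃ m : ℕ, e = Sum.inr m ∧ actAt d m = some a

/-- `e ∼ f` in the data word `d`. -/
def SimE {A B P Q : Type} (d : Word (DMove A B P Q)) (e f : Elem P Q) : Prop :=
  ∃ q, classOfE d e = some q ∧ classOfE d f = some q

/-- `e ≲ f` in the data word `d`. -/
def LesimE {A B P Q : Type} (d : Word (DMove A B P Q)) (e f : Elem P Q) : Prop :=
  ∃ m m' : ℕ, e = Sum.inr m ∧ f = Sum.inr m' ∧ m < m' ∧ SimE d e f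

/-- Agreement of a correspondence between elements of two data words: it must
preserve equality, `Proc_S`, `Proc_E`, the letters, `≲` and `∼`. -/
def AgreeDW {A B P Q P' Q' : Type} (d : Word (DMove A B P Q))
    (d' : Word (DMove A B P' Q')) (E : List (Elem P Q × Elem P' Q')) : Prop :=
  ∀ e ∈ E, ∀ f ∈ E,
    ((e.1 = f.1) ↔ (e.2 = f.2)) ∧
    (IsProcSE e.1 ↔ IsProcSE e.2) ∧
    (IsProcEE e.1 ↔ IsProcEE e.2) ∧
    (∀ a : A ⊕ B, LetterIsE d e.1 a ↔ LetterIsE d' e.2 a) ∧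
    (LesimE d e.1 f.1 ↔ LesimE d' e.2 f.2) ∧
    (SimE d e.1 f.1 ↔ SimE d' e.2 f.2)

/-- A legal bounding move: a position whose class contains no previously placed
bounding pebble (from `l`) and no bounding constant (from `B0`). -/
def LegalBound {A B P Q : Type} (d : Word (DMove A B P Q)) (B0 : List ℕ)
    (l : List (Peb P Q)) (m : ℕ) : Prop :=
  d m ≠ none ∧ (∀ m₀ : ℕ, Peb.bound m₀ ∈ l → procAt d m ≠ procAt d m₀) ∧
    (∀ m₀ ∈ B0, procAt d m ≠ procAt d m₀)

/-- A legal prefix move: a position such that some previously placed bounding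
pebble or bounding constant lies in the same class, at a later position. -/
def LegalPref {A B P Q : Type} (d : Word (DMove A B P Q)) (B0 : List ℕ)
    (l : List (Peb P Q)) (m : ℕ) : Prop :=
  d m ≠ none ∧
    ∃ m₀ : ℕ, (Peb.bound m₀ ∈ l ∨ m₀ ∈ B0) ∧ m < m₀ ∧ procAt d m = procAt d m₀

/-- The matched pairs of elements determined by the constants `E0` and the
pebbles `L`. -/
def pairElems {P Q P' Q' : Type} (E0 : List (Elem P Q × Elem P' Q'))
    (L : List (Peb P Q × Peb P' Q')) : List (Elem P Q × Elem P' Q') :=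
  E0 ++ L.map (fun pq => (pq.1.elem, pq.2.elem))

/-- `DupWinDW d d' E0 B0 B0' r L`: Duplicator wins the `r`-round prefix EF game on
the data words `d` and `d'` with matched constant elements `E0` (the bounding
constants being interpreted by `B0` in `d` and by `B0'` in `d'`) and already
placed matched pebbles `L`. -/
def DupWinDW {A B P Q P' Q' : Type} (d : Word (DMove A B P Q))
    (d' : Word (DMove A B P' Q')) (E0 : List (Elem P Q × Elem P' Q'))
    (B0 B0' : List ℕ) : ℕ → List (Peb P Q × Peb P' Q') → Prop
  | 0, L => AgreeDW d d' (pairElems E0 L)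
  | r + 1, L => AgreeDW d d' (pairElems E0 L) ∧
      (∀ q : P ⊕ Q, ∃ q' : P' ⊕ Q',
        DupWinDW d d' E0 B0 B0' r ((Peb.proc q, Peb.proc q') :: L)) ∧
      (∀ q' : P' ⊕ Q', ∃ q : P ⊕ Q,
        DupWinDW d d' E0 B0 B0' r ((Peb.proc q, Peb.proc q') :: L)) ∧
      (∀ m : ℕ, LegalBound d B0 (L.map Prod.fst) m →
        ∃ m' : ℕ, LegalBound d' B0' (L.map Prod.snd) m' ∧
          DupWinDW d d' E0 B0 B0' r ((Peb.bound m, Peb.bound m') :: L)) ∧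
      (∀ m' : ℕ, LegalBound d' B0' (L.map Prod.snd) m' →
        ∃ m : ℕ, LegalBound d B0 (L.map Prod.fst) m ∧
          DupWinDW d d' E0 B0 B0' r ((Peb.bound m, Peb.bound m') :: L)) ∧
      (∀ m : ℕ, LegalPref d B0 (L.map Prod.fst) m →
        ∃ m' : ℕ, LegalPref d' B0' (L.map Prod.snd) m' ∧
          DupWinDW d d' E0 B0 B0' r ((Peb.pref m, Peb.pref m') :: L)) ∧
      (∀ m' : ℕ, LegalPref d' B0' (L.map Prod.snd) m' →
        ∃ m : ℕ, LegalPref d B0 (L.map Prod.fst) m ∧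
          DupWinDW d d' E0 B0 B0' r ((Peb.pref m, Peb.pref m') :: L))

/-- The constants of a data word: interpretations of `cp` process constants,
`cb` bounding constants and `cx` prefix constants.  Validity: bounding and
prefix constants are positions, no two bounding constants share a class, and
each prefix constant is `≲` some bounding constant. -/
def ValidConsts {A B P Q : Type} {cp cb cx : ℕ} (d : Word (DMove A B P Q))
    (γP : Fin cp → P ⊕ Q) (γB : Fin cb → ℕ) (γX : Fin cx → ℕ) : Prop :=
  (∀ j, d (γB j) ≠ none) ∧ (∀ j, d (γX j) ≠ none) ∧
  (∀ i j, i ≠ j → procAt d (γB i) ≠ procAt d (γB j)) ∧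
  (∀ i, ∃ j, γX i < γB j ∧ procAt d (γX i) = procAt d (γB j))

/-- The matched constant elements determined by two interpretations of the same
constant symbols. -/
def constPairs {P Q P' Q' : Type} {cp cb cx : ℕ}
    (γP : Fin cp → P ⊕ Q) (γB : Fin cb → ℕ) (γX : Fin cx → ℕ)
    (γP' : Fin cp → P' ⊕ Q') (γB' : Fin cb → ℕ) (γX' : Fin cx → ℕ) :
    List (Elem P Q × Elem P' Q') :=
  (List.ofFn fun i : Fin cp =>
    ((Sum.inl (γP i) : Elem P Q), (Sum.inl (γP' i) : Elem P' Q'))) ++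
  (List.ofFn fun i : Fin cb =>
    ((Sum.inr (γB i) : Elem P Q), (Sum.inr (γB' i) : Elem P' Q'))) ++
  (List.ofFn fun i : Fin cx =>
    ((Sum.inr (γX i) : Elem P Q), (Sum.inr (γX' i) : Elem P' Q')))

/-! ### The standard synthesis game -/

/-- A System strategy in the standard synthesis game: given the finite data word
played so far, output a System action and process, or pass (`none` plays the
role of `ε`). -/
abbrev Strat (A B P Q : Type) : Type := List (DMove A B P Q) → Option (A × P)

/-- The list of the first `n` moves of a data word. -/
def histList {M : Type} (d : Word M) (n : ℕ) : List M := (List.range n).filterMap d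

/-- The data word `d` is compatible with the System strategy `σ`. -/
def CompatibleStd {A B P Q : Type} (σ : Strat A B P Q) (d : Word (DMove A B P Q)) :
    Prop :=
  ∀ i a p, d i = some (Sum.inl (a, p)) → σ (histList d i) = some (a, p)

/-- The data word `d` is fair with respect to `σ`: either it is finite and `σ`
passes after it, or (being infinite) if `σ` wants to play infinitely often then
System actions occur infinitely often. -/
def FairStd {A B P Q : Type} (σ : Strat A B P Q) (d : Word (DMove A B P Q)) : Prop :=
  (∃ n, d n = none ∧ (∀ i, i < n → d i ≠ none) ∧ σ (histList d n) = none) ∨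
  ((∀ n, d n ≠ none) ∧
    ((∀ N, ∃ i, N ≤ i ∧ σ (histList d (i + 1)) ≠ none) →
     (∀ N, ∃ i, N ≤ i ∧ ∃ a p, d i = some (Sum.inl (a, p)))))

/-- `σ` is winning for `φ` in the standard synthesis game: every compatible and
fair data word satisfies `φ`. -/
def WinningStd {A B P Q : Type} (φ : PDW A B 0 0 0) (σ : Strat A B P Q) : Prop :=
  ∀ d : Word (DMove A B P Q), Word.Closed d → CompatibleStd σ d → FairStd σ d →
    SatS d φ

/-- System has an `(nS, nE)`-winning strategy for `φ` in the standard synthesis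
game: a winning strategy whenever `|P_S| = nS` and `|P_E| = nE`. -/
def SystemWinsStd (A B : Type) (φ : PDW A B 0 0 0) (nS nE : ℕ) : Prop :=
  ∀ (P Q : Type), Finite P → Finite Q → Nat.card P = nS → Nat.card Q = nE →
    ∃ σ : Strat A B P Q, WinningStd φ σ

/-! ### The symmetric game -/

/-- A System strategy in the symmetric game: may answer by any finite sequence
of System moves (`[]` playing the role of `ε`). -/
abbrev SymStrat (A B P Q : Type) : Type := List (DMove A B P Q) → List (A × P)

/-- The history after `n` rounds of the symmetric game, the Environment playing
the finite blocks `env 0, env 1, …` and System answering according to `σ`,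
with strict alternation, Environment first. -/
def symHist {A B P Q : Type} (σ : SymStrat A B P Q) (env : ℕ → List (B × Q)) :
    ℕ → List (DMove A B P Q)
  | 0 => []
  | n + 1 =>
      let h := symHist σ env n ++ (env n).map Sum.inr
      h ++ (σ h).map Sum.inl

/-- The data word `d` is compatible with the symmetric strategy `σ`: it is the
limit of the histories of an alternating play in which System follows `σ`. -/
def CompatibleSym {A B P Q : Type} (σ : SymStrat A B P Q)
    (d : Word (DMove A B P Q)) : Prop :=
  ∃ env : ℕ → List (B × Q),
    (∀ n i x, (symHist σ env n)[i]? = some x → d i = some x) ∧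
    (∀ i, d i ≠ none → ∃ n, i < (symHist σ env n).length)

/-- Fairness in the symmetric game: if `d` is finite then `σ` passes after it. -/
def FairSym {A B P Q : Type} (σ : SymStrat A B P Q) (d : Word (DMove A B P Q)) :
    Prop :=
  ∀ n, d n = none → (∀ i, i < n → d i ≠ none) → σ (histList d n) = []

/-- `σ` is winning for `φ` in the symmetric game. -/
def WinningSym {A B P Q : Type} (φ : PDW A B 0 0 0) (σ : SymStrat A B P Q) : Prop :=
  ∀ d : Word (DMove A B P Q), Word.Closed d → CompatibleSym σ d → FairSym σ d →
    SatS d φ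

/-- System has an `(nS, nE)`-winning strategy for `φ` in the symmetric game. -/
def SystemWinsSym (A B : Type) (φ : PDW A B 0 0 0) (nS nE : ℕ) : Prop :=
  ∀ (P Q : Type), Finite P → Finite Q → Nat.card P = nS → Nat.card Q = nE →
    ∃ σ : SymStrat A B P Q, WinningSym φ σ

/-! ### The token game on types -/

/-- A node of the arena: a prefFO `k`-type of finite words. -/
abbrev Typ (A : Type) (k : ℕ) : Type := {T : Set (PSen A) // T ∈ WTypes A k}

/-- The initial node: the type of the empty word. -/
def initTyp (A : Type) (k : ℕ) : Typ A k :=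
  ⟨tp k (Word.ofList ([] : List A)), ⟨[], rfl⟩⟩

/-- The transition relation of the arena. -/
def typLe {A : Type} {k : ℕ} (τ τ' : Typ A k) : Prop := typeLe k τ.1 τ'.1

/-- A configuration: the position of each token in the arena.  `TS` and `TE` are
the sets of System and Environment tokens. -/
abbrev Conf (A : Type) (k : ℕ) (TS TE : Type) : Type := (TS ⊕ TE) → Typ A k

/-- A System strategy in the token game: given the sequence of configurations
so far, where to move each System token. -/
abbrev TokStrat (A : Type) (k : ℕ) (TS TE : Type) : Type :=
  List (Conf A k TS TE) → TS → Typ A k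

/-- A play of the token game: all tokens start on the initial node, tokens only
move along `⪯`, and the players strictly alternate, Environment first (at even
stages Environment moves, so System tokens stay put; at odd stages System moves). -/
def IsPlay {A : Type} {k : ℕ} {TS TE : Type} (conf : ℕ → Conf A k TS TE) : Prop :=
  (∀ t, conf 0 t = initTyp A k) ∧
  (∀ n t, typLe (conf n t) (conf (n + 1) t)) ∧
  (∀ n, Even n → ∀ t : TS, conf (n + 1) (Sum.inl t) = conf n (Sum.inl t)) ∧
  (∀ n, ¬ Even n → ∀ t : TE, conf (n + 1) (Sum.inr t) = conf n (Sum.inr t))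

/-- The play `conf` is compatible with the System strategy `σ`. -/
def CompatibleTok {A : Type} {k : ℕ} {TS TE : Type} (σ : TokStrat A k TS TE)
    (conf : ℕ → Conf A k TS TE) : Prop :=
  ∀ n, ¬ Even n → ∀ t : TS,
    conf (n + 1) (Sum.inl t) = σ (List.ofFn (fun i : Fin (n + 1) => conf i)) t

/-- The strategy `σ` only suggests legal moves (along `⪯`). -/
def StratLegal {A : Type} {k : ℕ} {TS TE : Type} (σ : TokStrat A k TS TE) : Prop :=
  ∀ (h : List (Conf A k TS TE)) (hne : h ≠ []) (t : TS),
    typLe (h.getLast hne (Sum.inl t)) (σ h t)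

/-- A configuration matches a `k`-counting function `c` (values `≥ k`
representing `k+`): the number of tokens on each type `τ` is exactly `c τ` when
`c τ < k`, and at least `k` otherwise. -/
def CfgMatches {A : Type} {k : ℕ} {TS TE : Type} (c : Typ A k → ℕ)
    (cfg : Conf A k TS TE) : Prop :=
  ∀ τ : Typ A k,
    (c τ < k → Nat.card {t : TS ⊕ TE // cfg t = τ} = c τ) ∧
    (¬ c τ < k → k ≤ Nat.card {t : TS ⊕ TE // cfg t = τ})

/-- The acceptance set `Acc_φ`: the `k`-counting functions `c` such that every
data word whose numbers of classes of each prefFO `k`-type match `c` satisfies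
`φ`. -/
def AccC (A B : Type) (k : ℕ) (φ : PDW A B 0 0 0) (c : Typ (A ⊕ B) k → ℕ) : Prop :=
  (∀ τ, c τ ≤ k) ∧
  ∀ (P Q : Type) (d : Word (DMove A B P Q)), Word.Closed d →
    (∀ τ : Typ (A ⊕ B) k,
      (c τ < k → Cardinal.mk ↥(classesOfType d k τ.1) = (c τ : Cardinal)) ∧
      (¬ c τ < k → (k : Cardinal) ≤ Cardinal.mk ↥(classesOfType d k τ.1))) →
    SatS d φ

/-- The strategy `σ` is winning in the token game for `φ`: every compatible
maximal play stabilizes in a limit configuration satisfying the acceptance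
condition. -/
def TokWinning {A B : Type} {k : ℕ} {TS TE : Type} (φ : PDW A B 0 0 0)
    (σ : TokStrat (A ⊕ B) k TS TE) : Prop :=
  ∀ conf : ℕ → Conf (A ⊕ B) k TS TE, IsPlay conf → CompatibleTok σ conf →
    ∃ N, (∀ n, N ≤ n → conf n = conf N) ∧
      ∃ c : Typ (A ⊕ B) k → ℕ, AccC A B k φ c ∧ CfgMatches c (conf N)

/-- The pair `(nS, nE)` is winning for System in the token game for `φ` (of
depth `k`). -/
def SystemWinsTok (A B : Type) (k : ℕ) (φ : PDW A B 0 0 0) (nS nE : ℕ) : Prop :=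
  ∀ (TS TE : Type), Finite TS → Finite TE → Nat.card TS = nS → Nat.card TE = nE →
    ∃ σ : TokStrat (A ⊕ B) k TS TE, StratLegal σ ∧ TokWinning φ σ

/-! ### An explicit encoding of prefFO^dw sentences, for decidability -/

/-- Encoding of a variable. -/
def encodeDVar {p b x : ℕ} : DVar p b x → ℕ
  | .inl i => Nat.pair 0 i.1
  | .inr (.inl i) => Nat.pair 1 i.1
  | .inr (.inr i) => Nat.pair 2 i.1

/-- An explicit injective encoding of prefFO^dw formulas over the alphabets
`Fin m` and `Fin n` into the natural numbers. -/
def encodePDW {m n : ℕ} : {p b x : ℕ} → PDW (Fin m) (Fin n) p b x → ℕ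
  | _, _, _, .eq v w => Nat.pair 0 (Nat.pair (encodeDVar v) (encodeDVar w))
  | _, _, _, .procS i => Nat.pair 1 i.1
  | _, _, _, .procE i => Nat.pair 2 i.1
  | _, _, _, .letter a v =>
      Nat.pair 3 (Nat.pair
        (Sum.elim (fun i => Nat.pair 0 i.1) (fun j => Nat.pair 1 j.1) a)
        (Sum.elim (fun i => Nat.pair 0 i.1) (fun j => Nat.pair 1 j.1) v))
  | _, _, _, .lesim i j => Nat.pair 4 (Nat.pair i.1 j.1)
  | _, _, _, .sim i v => Nat.pair 5 (Nat.pair i.1 (encodeDVar v))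
  | _, _, _, .and φ ψ => Nat.pair 6 (Nat.pair (encodePDW φ) (encodePDW ψ))
  | _, _, _, .not φ => Nat.pair 7 (encodePDW φ)
  | _, _, _, .exP φ => Nat.pair 8 (encodePDW φ)
  | _, _, _, .exB φ => Nat.pair 9 (encodePDW φ)
  | _, _, _, .exX y φ => Nat.pair 10 (Nat.pair y.1 (encodePDW φ))

end PrefSynth

namespace PrefSynth

/-- Translation of prefFO formulas into full FO. -/
def transF {A : Type} : {n : ℕ} → PFm A n → FOFm A n
  | _, .eq i j => .eq i j
  | _, .lt i j => .lt i j
  | _, .letter a i => .letter a i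
  | _, .and φ ψ => .and (transF φ) (transF ψ)
  | _, .not φ => .not (transF φ)
  | _, .exlt φ => .ex (.and (.lt (Fin.last _) 0) (transF φ))

lemma depth_transF {A : Type} : ∀ {n : ℕ} (φ : PFm A n),
    (transF φ).depth = φ.depth
  | _, .eq _ _ => rfl
  | _, .lt _ _ => rfl
  | _, .letter _ _ => rfl
  | _, .and φ ψ => by simp [transF, FOFm.depth, PFm.depth, depth_transF φ, depth_transF ψ]
  | _, .not φ => by simp [transF, FOFm.depth, PFm.depth, depth_transF φ]
  | _, .exlt φ => by simp [transF, FOFm.depth, PFm.depth, depth_transF φ]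

lemma sat_transF {A : Type} (w : Word A) : ∀ {n : ℕ} (φ : PFm A n) (ρ : Fin n → ℕ),
    FOFm.Sat w (transF φ) ρ ↔ PFm.Sat w φ ρ := by
  intro n φ
  induction φ with
  | eq i j => intro ρ; rfl
  | lt i j => intro ρ; rfl
  | letter a i => intro ρ; rfl
  | and φ ψ ih1 ih2 => intro ρ; exact and_congr (ih1 ρ) (ih2 ρ)
  | not φ ih => intro ρ; exact not_congr (ih ρ)
  | exlt φ ih =>
    intro ρ
    simp only [transF, FOFm.Sat, PFm.Sat]
    refine exists_congr fun m => and_congr_right fun _ => ?_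
    have h0 : (Fin.snoc ρ m : Fin _ → ℕ) 0 = ρ 0 := by
      rw [show (0 : Fin _) = Fin.castSucc 0 by simp, Fin.snoc_castSucc]
    rw [Fin.snoc_last, h0, ih]

/-- Translation of prefFO sentences into full FO sentences. -/
def transS {A : Type} : PSen A → FOFm A 0
  | .exB φ => .ex (transF φ)
  | .and s t => .and (transS s) (transS t)
  | .not s => .not (transS s)

lemma depth_transS {A : Type} : ∀ s : PSen A, (transS s).depth = s.depth
  | .exB φ => by simp [transS, FOFm.depth, PSen.depth, depth_transF]
  | .and s t => by simp [transS, FOFm.depth, PSen.depth, depth_transS s, depth_transS t]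
  | .not s => by simp [transS, FOFm.depth, PSen.depth, depth_transS s]

lemma sat_transS {A : Type} (w : Word A) : ∀ s : PSen A,
    FOFm.Sat w (transS s) Fin.elim0 ↔ PSen.Sat w s
  | .exB φ => by
    simp only [transS, FOFm.Sat, PSen.Sat]
    refine exists_congr fun m => and_congr_right fun _ => ?_
    have : (Fin.snoc Fin.elim0 m : Fin 1 → ℕ) = fun _ => m := by
      funext i
      have : i = Fin.last 0 := Fin.ext (by omega)
      rw [this, Fin.snoc_last]
    rw [sat_transF, this]
  | .and s t => by
    simp only [transS, FOFm.Sat, PSen.Sat]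
    exact and_congr (sat_transS w s) (sat_transS w t)
  | .not s => by
    simp only [transS, FOFm.Sat, PSen.Sat]
    exact not_congr (sat_transS w s)

/-- Satisfaction of a prefFO formula only depends on the prefix of the word up
to a bound on the assignment. -/
lemma sat_congr {A : Type} {w w' : Word A} {N : ℕ}
    (hw : ∀ j, j ≤ N → w j = w' j) :
    ∀ {n : ℕ} (φ : PFm A n) (ρ : Fin n → ℕ), (∀ i, ρ i ≤ N) →
      (PFm.Sat w φ ρ ↔ PFm.Sat w' φ ρ) := by
  intro n φ
  induction φ with
  | eq i j => intro ρ _; rfl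
  | lt i j => intro ρ _; rfl
  | letter a i => intro ρ hρ; simp only [PFm.Sat, hw _ (hρ i)]
  | and φ ψ ih1 ih2 => intro ρ hρ; exact and_congr (ih1 ρ hρ) (ih2 ρ hρ)
  | not φ ih => intro ρ hρ; exact not_congr (ih ρ hρ)
  | exlt φ ih =>
    intro ρ hρ
    simp only [PFm.Sat]
    refine exists_congr fun m => ?_
    constructor
    · rintro ⟨hp, hlt, hs⟩
      have hmN : m ≤ N := le_trans (le_of_lt hlt) (hρ 0)
      have hb : ∀ i, (Fin.snoc ρ m : Fin _ → ℕ) i ≤ N := by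
        intro i
        refine Fin.lastCases ?_ ?_ i
        · rw [Fin.snoc_last]; exact hmN
        · intro j; rw [Fin.snoc_castSucc]; exact hρ j
      exact ⟨by unfold Word.pos at hp ⊢; rwa [← hw m hmN], hlt,
        (ih (Fin.snoc ρ m) hb).mp hs⟩
    · rintro ⟨hp, hlt, hs⟩
      have hmN : m ≤ N := le_trans (le_of_lt hlt) (hρ 0)
      have hb : ∀ i, (Fin.snoc ρ m : Fin _ → ℕ) i ≤ N := by
        intro i
        refine Fin.lastCases ?_ ?_ i
        · rw [Fin.snoc_last]; exact hmN
        · intro j; rw [Fin.snoc_castSucc]; exact hρ j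
      exact ⟨by unfold Word.pos at hp ⊢; rwa [hw m hmN], hlt,
        (ih (Fin.snoc ρ m) hb).mpr hs⟩

lemma ofList_append_agree {A : Type} (u u' : List A) {m : ℕ} (hm : m < u.length) :
    ∀ j, j ≤ m → Word.ofList u j = Word.ofList (u ++ u') j := by
  intro j hj
  have hj' : j < u.length := lt_of_le_of_lt hj hm
  simp [Word.ofList, List.getElem?_append, hj']

lemma pos_ofList {A : Type} {u : List A} {m : ℕ} :
    Word.pos (Word.ofList u) m ↔ m < u.length := by
  simp only [Word.pos, Word.ofList, ne_eq, List.getElem?_eq_none_iff, not_le]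

/-- Monotonicity of `exB` sentences under extension of the word. -/
lemma exB_mono {A : Type} (u u' : List A) (φ : PFm A 1) :
    PSen.Sat (Word.ofList u) (.exB φ) → PSen.Sat (Word.ofList (u ++ u')) (.exB φ) := by
  rintro ⟨m, hm, hs⟩
  have hmlen : m < u.length := pos_ofList.mp hm
  have hw := ofList_append_agree u u' hmlen
  refine ⟨m, ?_, ?_⟩
  · rw [pos_ofList]
    simp only [List.length_append]
    omega
  · exact (sat_congr hw φ (fun _ => m) (fun _ => le_refl m)).mp hs

/-- If there are finite words `u'`, `v'` such that
`u·u' ≡FO_k v` and `u ≡FO_k v·v'`, then `u ≡prefFO_k v`. -/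
theorem foEquiv_extensions_imp_prefEquiv {A : Type} [Finite A] (k : ℕ)
    (u v : List A)
    (h : ∃ u' v' : List A,
      foEquiv k (Word.ofList (u ++ u')) (Word.ofList v) ∧
      foEquiv k (Word.ofList u) (Word.ofList (v ++ v'))) :
    prefEquiv k (Word.ofList u) (Word.ofList v) := by
  obtain ⟨u', v', h1, h2⟩ := h
  intro s
  induction s with
  | exB φ =>
    intro hd
    constructor
    · intro hs
      have h3 : PSen.Sat (Word.ofList (u ++ u')) (.exB φ) := exB_mono u u' φ hs
      have h4 := (h1 (transS (.exB φ)) (by rw [depth_transS]; exact hd)).mp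
        ((sat_transS _ _).mpr h3)
      exact (sat_transS _ _).mp h4
    · intro hs
      have h3 : PSen.Sat (Word.ofList (v ++ v')) (.exB φ) := exB_mono v v' φ hs
      have h4 := (h2 (transS (.exB φ)) (by rw [depth_transS]; exact hd)).mpr
        ((sat_transS _ _).mpr h3)
      exact (sat_transS _ _).mp h4
  | and s t ihs iht =>
    intro hd
    simp only [PSen.depth, max_le_iff] at hd
    exact and_congr (ihs hd.1) (iht hd.2)
  | not s ih =>
    intro hd
    exact not_congr (ih hd)

end PrefSynth
end

section
/- Let 𝔴₁ and 𝔴₂ be data words over the same alphabet and process sets such that 𝔴₂ is a reordering of the positions of 𝔴₁ in which every process has the same class (the same sequence of actions) as in 𝔴₁. Then 𝔴₁ and 𝔴₂ satisfy exactly the same prefFO^dw sentences. -/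
set_option maxHeartbeats 1000000

namespace PrefSynth

/-
The map `id ⊕ f` on elements is a bijection between the structures of `d₁` and `d₂`
preserving `Proc_S`, `Proc_E`, the letters and `∼`; only the global order `<` is lost.
A prefFO^dw formula sees `<` only through `≲`, i.e. inside a single class, where `f` is
increasing, so `id ⊕ f` preserves satisfaction of every formula.
-/

theorem Word.pos_snoc {α : Type} {w : Word α} {n : ℕ} {ρ : Fin n → ℕ} {m : ℕ}
    (hρ : ∀ j, Word.pos w (ρ j)) (hm : Word.pos w m) :
    ∀ j, Word.pos w (Fin.snoc (α := fun _ => ℕ) ρ m j) :=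
  Fin.forall_fin_succ'.2 ⟨by simpa using hρ, by simpa using hm⟩

structure ClassPreservingReordering {A B P Q : Type} (d₁ d₂ : Word (DMove A B P Q))
    (f : ℕ → ℕ) : Prop where
  injOn : ∀ i j, Word.pos d₁ i → Word.pos d₁ j → f i = f j → i = j
  apply_eq : ∀ i, Word.pos d₁ i → d₂ (f i) = d₁ i
  surjOn : ∀ j, Word.pos d₂ j → ∃ i, Word.pos d₁ i ∧ f i = j
  lt_of_procAt_eq : ∀ i j, Word.pos d₁ i → Word.pos d₁ j → i < j →
    procAt d₁ i = procAt d₁ j → f i < f j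

def IsElemOf {A B P Q : Type} (d : Word (DMove A B P Q)) : Elem P Q → Prop
  | .inl _ => True
  | .inr m => Word.pos d m

theorem isElemOf_interpDVar {A B P Q : Type} {d : Word (DMove A B P Q)} {p b x : ℕ}
    {ρP : Fin p → P ⊕ Q} {ρB : Fin b → ℕ} {ρX : Fin x → ℕ}
    (hB : ∀ j, Word.pos d (ρB j)) (hX : ∀ j, Word.pos d (ρX j)) (v : DVar p b x) :
    IsElemOf d (interpDVar ρP ρB ρX v) := by
  rcases v with _ | _ | _
  exacts [trivial, hB _, hX _]

theorem interpDVar_comp {P Q : Type} {p b x : ℕ} (f : ℕ → ℕ) (ρP : Fin p → P ⊕ Q)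
    (ρB : Fin b → ℕ) (ρX : Fin x → ℕ) (v : DVar p b x) :
    interpDVar ρP (f ∘ ρB) (f ∘ ρX) v = Sum.map id f (interpDVar ρP ρB ρX v) := by
  rcases v with _ | _ | _ <;> rfl

namespace ClassPreservingReordering

variable {A B P Q : Type} {d₁ d₂ : Word (DMove A B P Q)} {f : ℕ → ℕ}
  (hf : ClassPreservingReordering d₁ d₂ f)
include hf

theorem pos_apply {i : ℕ} (hi : Word.pos d₁ i) : Word.pos d₂ (f i) := by
  rwa [Word.pos, hf.apply_eq i hi]

theorem procAt_apply {i : ℕ} (hi : Word.pos d₁ i) : procAt d₂ (f i) = procAt d₁ i := by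
  rw [procAt, hf.apply_eq i hi, procAt]

theorem actAt_apply {i : ℕ} (hi : Word.pos d₁ i) : actAt d₂ (f i) = actAt d₁ i := by
  rw [actAt, hf.apply_eq i hi, actAt]

theorem apply_lt_apply_iff {i j : ℕ} (hi : Word.pos d₁ i) (hj : Word.pos d₁ j)
    (hij : procAt d₁ i = procAt d₁ j) : f i < f j ↔ i < j := by
  refine ⟨fun hlt => ?_, fun h => hf.lt_of_procAt_eq i j hi hj h hij⟩
  rcases lt_trichotomy i j with h | rfl | h
  · exact h
  · exact absurd hlt (lt_irrefl _)
  · exact absurd (hf.lt_of_procAt_eq j i hj hi h hij.symm) hlt.not_gt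

theorem sumMap_eq_sumMap_iff {e e' : Elem P Q} (he : IsElemOf d₁ e) (he' : IsElemOf d₁ e') :
    Sum.map id f e = Sum.map id f e' ↔ e = e' := by
  refine ⟨fun h => ?_, congrArg _⟩
  rcases e with q | m <;> rcases e' with q' | m' <;> simp only [Sum.map_inl, Sum.map_inr,
    id, Sum.inl.injEq, Sum.inr.injEq, reduceCtorEq] at h ⊢
  exacts [h, hf.injOn m m' he he' h]

theorem classOfE_sumMap {e : Elem P Q} (he : IsElemOf d₁ e) :
    classOfE d₂ (Sum.map id f e) = classOfE d₁ e := by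
  rcases e with q | m
  exacts [rfl, hf.procAt_apply he]

theorem exists_pos_iff {R : ℕ → Prop} :
    (∃ m', d₂ m' ≠ none ∧ R m') ↔ ∃ m, d₁ m ≠ none ∧ R (f m) := by
  refine ⟨fun ⟨m', hm', hR⟩ => ?_, fun ⟨m, hm, hR⟩ => ⟨f m, hf.pos_apply hm, hR⟩⟩
  obtain ⟨m, hm, rfl⟩ := hf.surjOn m' hm'
  exact ⟨m, hm, hR⟩

theorem sat_iff {p b x : ℕ} (φ : PDW A B p b x) (ρP : Fin p → P ⊕ Q) (ρB : Fin b → ℕ)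
    (ρX : Fin x → ℕ) (hB : ∀ j, Word.pos d₁ (ρB j)) (hX : ∀ j, Word.pos d₁ (ρX j)) :
    PDW.Sat d₁ φ ρP ρB ρX ↔ PDW.Sat d₂ φ ρP (f ∘ ρB) (f ∘ ρX) := by
  induction φ with
  | eq v w =>
    simp only [PDW.Sat, interpDVar_comp]
    exact (hf.sumMap_eq_sumMap_iff (isElemOf_interpDVar hB hX v)
      (isElemOf_interpDVar hB hX w)).symm
  | procS i => rfl
  | procE i => rfl
  | letter a v =>
    have hv : Word.pos d₁ (Sum.elim ρB ρX v) := by rcases v with j | j <;> simp [hB, hX]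
    simp only [PDW.Sat, ← Sum.comp_elim, Function.comp_apply, hf.actAt_apply hv]
  | lesim i j =>
    simp only [PDW.Sat, Function.comp_apply, hf.procAt_apply (hX i), hf.procAt_apply (hX j)]
    exact and_congr_left fun ⟨_, hi, hj⟩ =>
      (hf.apply_lt_apply_iff (hX i) (hX j) (hi.trans hj.symm)).symm
  | sim i v =>
    simp only [PDW.Sat, interpDVar_comp, hf.classOfE_sumMap (isElemOf_interpDVar hB hX v)]
  | and φ ψ ihφ ihψ => exact and_congr (ihφ ρP ρB ρX hB hX) (ihψ ρP ρB ρX hB hX)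
  | not φ ih => exact not_congr (ih ρP ρB ρX hB hX)
  | exP φ ih => exact exists_congr fun q => ih (Fin.snoc ρP q) ρB ρX hB hX
  | exB φ ih =>
    refine Iff.trans ?_ hf.exists_pos_iff.symm
    refine exists_congr fun m => and_congr_right fun hm => ?_
    simp only [Function.comp_apply, hf.procAt_apply hm, hf.procAt_apply (hB _)]
    rw [← Fin.comp_snoc, ← ih ρP _ ρX (Word.pos_snoc hB hm) hX]
  | exX y φ ih =>
    refine Iff.trans ?_ hf.exists_pos_iff.symm
    refine exists_congr fun m => and_congr_right fun hm => ?_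
    simp only [Function.comp_apply, hf.procAt_apply hm, hf.procAt_apply (hB y)]
    rw [← Fin.comp_snoc, ← ih ρP ρB _ hB (Word.pos_snoc hX hm)]
    exact and_congr_left fun h => (hf.apply_lt_apply_iff hm (hB y) h.1).symm

end ClassPreservingReordering

theorem reordering_preserves_prefFOdw_general {A B P Q : Type}
    (d₁ d₂ : Word (DMove A B P Q))
    (f : ℕ → ℕ)
    (hinj : ∀ i j, Word.pos d₁ i → Word.pos d₁ j → f i = f j → i = j)
    (hlab : ∀ i, Word.pos d₁ i → d₂ (f i) = d₁ i)
    (hsurj : ∀ j, Word.pos d₂ j → ∃ i, Word.pos d₁ i ∧ f i = j)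
    (hord : ∀ i j, Word.pos d₁ i → Word.pos d₁ j → i < j →
      procAt d₁ i = procAt d₁ j → f i < f j) :
    ∀ φ : PDW A B 0 0 0, SatS d₁ φ ↔ SatS d₂ φ := by
  intro φ
  have hf : ClassPreservingReordering d₁ d₂ f := ⟨hinj, hlab, hsurj, hord⟩
  have hsat := hf.sat_iff φ Fin.elim0 Fin.elim0 Fin.elim0 (fun j => j.elim0)
    (fun j => j.elim0)
  rwa [Subsingleton.elim (f ∘ Fin.elim0) Fin.elim0] at hsat

/-- If `d₂` is a reordering of the positions of `d₁` (via a
label-preserving bijection `f` between their positions) in which every process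
has the same class — i.e. `f` is increasing on the positions of each process —
then `d₁` and `d₂` satisfy exactly the same prefFO^dw sentences. -/
theorem reordering_preserves_prefFOdw {A B P Q : Type} [Finite A] [Finite B]
    (d₁ d₂ : Word (DMove A B P Q)) (h₁ : Word.Closed d₁) (h₂ : Word.Closed d₂)
    (f : ℕ → ℕ)
    (hinj : ∀ i j, Word.pos d₁ i → Word.pos d₁ j → f i = f j → i = j)
    (hlab : ∀ i, Word.pos d₁ i → d₂ (f i) = d₁ i)
    (hsurj : ∀ j, Word.pos d₂ j → ∃ i, Word.pos d₁ i ∧ f i = j)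
    (hord : ∀ i j, Word.pos d₁ i → Word.pos d₁ j → i < j →
      procAt d₁ i = procAt d₁ j → f i < f j) :
    ∀ φ : PDW A B 0 0 0, SatS d₁ φ ↔ SatS d₂ φ :=
  reordering_preserves_prefFOdw_general d₁ d₂ f hinj hlab hsurj hord

end PrefSynth
end

section
/- For every k ∈ ℕ there exist finite words u and v over the two-letter alphabet {a,b} such that tp_k(u) = tp_k(v) but tp_3(u·a) ≠ tp_3(v·a); hence the equivalence 'having the same prefFO k-type' is not a congruence for concatenation in the monoid of finite words. Concretely, for n large enough with respect to k, u = (ab)^n·a and v = (ab)^{n+1} satisfy tp_k(u) = tp_k(v), while u·a contains two consecutive occurrences of a and v·a does not, a property expressible by a prefFO sentence of quantifier depth 3. -/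
set_option maxHeartbeats 1000000

namespace PrefSynth

/-- `(ab)^n`, over the alphabet `Bool` with `a = true` and `b = false`. -/
def abRep : ℕ → List Bool
  | 0 => []
  | n + 1 => true :: false :: abRep n

/-!
Both `(ab)^n a` and `(ab)^(n+1)` are prefixes of `(ab)^ω`, and a prefFO formula whose bounding
variable lies inside a prefix is evaluated there as in `(ab)^ω`. On `(ab)^ω`, two placements of
pebbles, each completed by a virtual pebble at `0`, satisfy the same formulas of depth `r` as
soon as their gaps agree exactly or are both at least `3^r` and of equal parity: a new pebble
falls into some gap, and a gap of length at least `3^(s+1)` can be split into two gaps matching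
the new ones up to threshold `3^s`. The only bounding position of `(ab)^(n+1)` missing from
`(ab)^n a` is its last one, `2n+1`, and it is matched by `2n-1`.
-/

def ThresholdEq (r a b : ℕ) : Prop :=
  a = b ∨ (3 ^ r ≤ a ∧ 3 ^ r ≤ b ∧ a % 2 = b % 2)

namespace ThresholdEq

variable {r s a a' b b' D : ℕ}

theorem refl (r a : ℕ) : ThresholdEq r a a := Or.inl rfl

theorem symm (h : ThresholdEq r a b) : ThresholdEq r b a := by
  rcases h with h | ⟨ha, hb, hab⟩
  exacts [Or.inl h.symm, Or.inr ⟨hb, ha, hab.symm⟩]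

theorem mono (hsr : s ≤ r) (h : ThresholdEq r a b) : ThresholdEq s a b := by
  have := Nat.pow_le_pow_right (by norm_num : 0 < 3) hsr
  rcases h with h | ⟨ha, hb, hab⟩
  exacts [Or.inl h, Or.inr ⟨by omega, by omega, hab⟩]

theorem mod_two_eq (h : ThresholdEq r a b) : a % 2 = b % 2 := by
  rcases h with rfl | h
  exacts [rfl, h.2.2]

theorem eq_zero_iff (h : ThresholdEq r a b) : a = 0 ↔ b = 0 := by
  have := Nat.one_le_pow r 3 (by norm_num)
  rcases h with rfl | h <;> omega

theorem add (ha : ThresholdEq r a a') (hb : ThresholdEq r b b') :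
    ThresholdEq r (a + b) (a' + b') := by
  have := ha.mod_two_eq
  have := hb.mod_two_eq
  rcases ha with rfl | ha
  · rcases hb with rfl | hb
    exacts [Or.inl rfl, Or.inr ⟨by omega, by omega, by omega⟩]
  · exact Or.inr ⟨by omega, by omega, by omega⟩

/-- The first part is kept exact if one of `a`, `b` is below `3 ^ s`, and is otherwise
`3 ^ s` or `3 ^ s + 1`, whichever has the parity of `a`. -/
theorem exists_split (h : ThresholdEq (s + 1) (a + b) D) :
    ∃ δ ≤ D, ThresholdEq s a δ ∧ ThresholdEq s b (D - δ) := by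
  rcases h with h | ⟨h1, h2, h3⟩
  · exact ⟨a, by omega, refl s a, Or.inl (by omega)⟩
  rw [pow_succ] at h1 h2
  have := Nat.one_le_pow s 3 (by norm_num)
  by_cases ha : a < 3 ^ s
  · exact ⟨a, by omega, refl s a, Or.inr ⟨by omega, by omega, by omega⟩⟩
  by_cases hb : b < 3 ^ s
  · exact ⟨D - b, by omega, Or.inr ⟨by omega, by omega, by omega⟩, Or.inl (by omega)⟩
  by_cases hp : a % 2 = 3 ^ s % 2
  · exact ⟨3 ^ s, by omega, Or.inr ⟨by omega, by omega, hp⟩,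
      Or.inr ⟨by omega, by omega, by omega⟩⟩
  · exact ⟨3 ^ s + 1, by omega, Or.inr ⟨by omega, by omega, by omega⟩,
      Or.inr ⟨by omega, by omega, by omega⟩⟩

end ThresholdEq

/-- Two placements of `c` pebbles that no formula of quantifier depth `r` distinguishes on
`(ab)^ω`. Differences are truncated, so the pairs `(i, j)` and `(j, i)` together also
record the relative order of the pebbles. -/
def DistEquiv (r : ℕ) {c : ℕ} (σ σ' : Fin c → ℕ) : Prop :=
  ∀ i j, ThresholdEq r (σ j - σ i) (σ' j - σ' i)

namespace DistEquiv

variable {r s c : ℕ} {σ σ' : Fin c → ℕ}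

theorem symm (h : DistEquiv r σ σ') : DistEquiv r σ' σ := fun i j => (h i j).symm

theorem mono (hsr : s ≤ r) (h : DistEquiv r σ σ') : DistEquiv s σ σ' :=
  fun i j => (h i j).mono hsr

theorem le_iff (h : DistEquiv r σ σ') (i j : Fin c) : σ i ≤ σ j ↔ σ' i ≤ σ' j := by
  simpa only [Nat.sub_eq_zero_iff_le] using (h j i).eq_zero_iff

theorem snoc {m m' : ℕ} (h : DistEquiv r σ σ')
    (hm : ∀ i, ThresholdEq r (m - σ i) (m' - σ' i) ∧ ThresholdEq r (σ i - m) (σ' i - m')) :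
    DistEquiv r (Fin.snoc σ m) (Fin.snoc σ' m') := by
  intro i j
  induction i using Fin.lastCases <;> induction j using Fin.lastCases <;>
    simp only [Fin.snoc_last, Fin.snoc_castSucc, Nat.sub_self]
  exacts [ThresholdEq.refl r 0, (hm _).2, (hm _).1, h _ _]

theorem exists_snoc (h : DistEquiv (s + 1) σ σ') {m : ℕ} {i j : Fin c} (hi : σ i ≤ m)
    (hj : m < σ j) : ∃ m', DistEquiv s (Fin.snoc σ m) (Fin.snoc σ' m') := by
  obtain ⟨lo, hlo, hlo_max⟩ :=
    Finset.exists_max_image {k | σ k ≤ m} σ ⟨i, by simpa using hi⟩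
  obtain ⟨up, hup, hup_min⟩ :=
    Finset.exists_min_image {k | m < σ k} σ ⟨j, by simpa using hj⟩
  simp only [Finset.mem_filter, Finset.mem_univ, true_and] at hlo hlo_max hup hup_min
  have hlo_up' : σ' lo ≤ σ' up := (h.le_iff lo up).1 (by omega)
  have hgap : σ up - σ lo = (m - σ lo) + (σ up - m) := by omega
  obtain ⟨δ, hδ, hbelow, habove⟩ := ThresholdEq.exists_split (hgap ▸ h lo up)
  refine ⟨σ' lo + δ, (h.mono s.le_succ).snoc fun k => ?_⟩
  by_cases hk : σ k ≤ m
  · have hk_lo : σ k ≤ σ lo := hlo_max k hk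
    have hk_lo' : σ' k ≤ σ' lo := (h.le_iff k lo).1 hk_lo
    have hsum := ((h k lo).mono s.le_succ).add hbelow
    refine ⟨by convert hsum using 1 <;> omega, Or.inl (by omega)⟩
  · have hk_up : σ up ≤ σ k := hup_min k (by omega)
    have hk_up' : σ' up ≤ σ' k := (h.le_iff up k).1 hk_up
    have hsum := habove.add ((h up k).mono s.le_succ)
    refine ⟨Or.inl (by omega), by convert hsum using 1 <;> omega⟩

end DistEquiv

/-- The infinite word `(ab)^ω`, with `a = true`. -/
def Wab : Word Bool := Word.ofFun fun i => decide (Even i)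

theorem Word.pos_take {A : Type} {w : Word A} {L m : ℕ} :
    (w.take L).pos m ↔ m < L ∧ w.pos m := by
  simp [Word.pos, Word.take]

theorem Word.pos_ofFun {A : Type} (u : ℕ → A) (m : ℕ) : (Word.ofFun u).pos m := by
  simp [Word.pos, Word.ofFun]

theorem PFm.sat_take_iff {A : Type} (w : Word A) (L : ℕ) {c : ℕ} (φ : PFm A c) :
    ∀ ρ : Fin c → ℕ, (∀ i, ρ i < L) → (PFm.Sat (w.take L) φ ρ ↔ PFm.Sat w φ ρ) := by
  induction φ with
  | eq | lt => exact fun _ _ => Iff.rfl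
  | letter a i => exact fun ρ hρ => by simp only [PFm.Sat, Word.take, if_pos (hρ i)]
  | and φ ψ ihφ ihψ => exact fun ρ hρ => and_congr (ihφ ρ hρ) (ihψ ρ hρ)
  | not φ ih => exact fun ρ hρ => not_congr (ih ρ hρ)
  | exlt φ ih =>
    intro ρ hρ
    have hsnoc {m} (hm : m < ρ 0) : ∀ i, (Fin.snoc ρ m : Fin _ → ℕ) i < L := fun i => by
      induction i using Fin.lastCases with
      | last => simpa only [Fin.snoc_last] using hm.trans (hρ 0)
      | cast i => simpa only [Fin.snoc_castSucc] using hρ i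
    simp only [PFm.Sat, Word.pos_take]
    exact exists_congr fun m => ⟨fun ⟨⟨_, hw⟩, hm, hφ⟩ => ⟨hw, hm, (ih _ (hsnoc hm)).1 hφ⟩,
      fun ⟨hw, hm, hφ⟩ => ⟨⟨hm.trans (hρ 0), hw⟩, hm, (ih _ (hsnoc hm)).2 hφ⟩⟩

theorem PFm.sat_Wab_iff {c : ℕ} (φ : PFm Bool c) : ∀ {r : ℕ} {ρ ρ' : Fin c → ℕ},
    φ.depth ≤ r → DistEquiv r (Fin.cons 0 ρ) (Fin.cons 0 ρ') →
    (PFm.Sat Wab φ ρ ↔ PFm.Sat Wab φ ρ') := by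
  induction φ with
  | eq i j =>
    intro r ρ ρ' _ h
    have := h.le_iff i.succ j.succ
    have := h.le_iff j.succ i.succ
    simp only [Fin.cons_succ] at *
    simp only [PFm.Sat]
    omega
  | lt i j =>
    intro r ρ ρ' _ h
    have := h.le_iff j.succ i.succ
    simp only [Fin.cons_succ] at *
    simp only [PFm.Sat]
    omega
  | letter a i =>
    intro r ρ ρ' _ h
    have hpar := (h 0 i.succ).mod_two_eq
    simp only [Fin.cons_succ, Fin.cons_zero, Nat.sub_zero] at hpar
    simp only [PFm.Sat, Wab, Word.ofFun, Option.some.injEq, Nat.even_iff, hpar]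
  | and φ ψ ihφ ihψ =>
    intro r ρ ρ' hd h
    exact and_congr (ihφ (le_of_max_le_left hd) h) (ihψ (le_of_max_le_right hd) h)
  | not φ ih => exact fun hd h => not_congr (ih hd h)
  | exlt φ ih =>
    intro r ρ ρ' hd h
    obtain ⟨s, rfl⟩ : ∃ s, r = s + 1 := ⟨r - 1, by simp only [PFm.depth] at hd; omega⟩
    have hd : φ.depth ≤ s := by simp only [PFm.depth] at hd; omega
    suffices ∀ {ρ ρ'}, DistEquiv (s + 1) (Fin.cons 0 ρ) (Fin.cons 0 ρ') →
        PFm.Sat Wab φ.exlt ρ → PFm.Sat Wab φ.exlt ρ' from ⟨this h, this h.symm⟩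
    rintro ρ ρ' h ⟨m, -, hm, hφ⟩
    obtain ⟨m', h'⟩ := h.exists_snoc (i := 0) (j := Fin.succ 0) (m := m)
      (by simp) (by simpa using hm)
    have hm' : m' < ρ' 0 := by
      have := h'.le_iff (Fin.castSucc (Fin.succ 0)) (Fin.last _)
      simp only [Fin.snoc_castSucc, Fin.snoc_last, Fin.cons_succ] at this
      omega
    rw [← Fin.cons_snoc_eq_snoc_cons, ← Fin.cons_snoc_eq_snoc_cons] at h'
    exact ⟨m', Word.pos_ofFun _ m', hm', (ih hd h').1 hφ⟩

theorem tp_eq_of_prefEquiv {A : Type} {k : ℕ} {w w' : Word A} (h : prefEquiv k w w') :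
    tp k w = tp k w' :=
  Set.ext fun s => and_congr_right (h s)

theorem prefEquiv_of_forall_exB {A : Type} {k : ℕ} {w w' : Word A}
    (h : ∀ φ : PFm A 1, φ.depth + 1 ≤ k → (PSen.Sat w (.exB φ) ↔ PSen.Sat w' (.exB φ))) :
    prefEquiv k w w' := by
  intro s hs
  induction s with
  | exB φ => exact h φ hs
  | and s t ihs iht =>
    exact and_congr (ihs (le_of_max_le_left hs)) (iht (le_of_max_le_right hs))
  | not s ih => exact not_congr (ih hs)

theorem PSen.sat_exB_take_iff {A : Type} (w : Word A) (L : ℕ) (φ : PFm A 1) :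
    PSen.Sat (w.take L) (.exB φ) ↔ ∃ m < L, w.pos m ∧ PFm.Sat w φ fun _ => m := by
  simp only [PSen.Sat, Word.pos_take]
  exact exists_congr fun m =>
    ⟨fun ⟨⟨hm, hw⟩, hφ⟩ => ⟨hm, hw, (φ.sat_take_iff w L _ fun _ => hm).1 hφ⟩,
      fun ⟨hm, hw, hφ⟩ => ⟨⟨hm, hw⟩, (φ.sat_take_iff w L _ fun _ => hm).2 hφ⟩⟩

theorem DistEquiv.cons_zero_const {r c x y : ℕ} (h : ThresholdEq r x y) :
    DistEquiv r (Fin.cons 0 fun _ : Fin c => x) (Fin.cons 0 fun _ => y) := by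
  intro i j
  induction i using Fin.cases <;> induction j using Fin.cases <;>
    simp only [Fin.cons_zero, Fin.cons_succ, Nat.sub_zero, Nat.zero_sub, Nat.sub_self]
  exacts [ThresholdEq.refl r 0, h, ThresholdEq.refl r 0, ThresholdEq.refl r 0]

theorem prefEquiv_take_Wab {k n : ℕ} (hn : 3 ^ k ≤ n) :
    prefEquiv k (Wab.take (2 * n + 1)) (Wab.take (2 * n + 2)) := by
  refine prefEquiv_of_forall_exB fun φ hφ => ?_
  simp only [PSen.sat_exB_take_iff, Wab, Word.pos_ofFun, true_and]
  refine ⟨fun ⟨m, hm, hsat⟩ => ⟨m, by omega, hsat⟩, fun ⟨m, hm, hsat⟩ => ?_⟩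
  by_cases hlast : m < 2 * n + 1
  · exact ⟨m, hlast, hsat⟩
  obtain rfl : m = 2 * n + 1 := by omega
  refine ⟨2 * n - 1, by omega, (φ.sat_Wab_iff le_rfl (DistEquiv.cons_zero_const ?_)).1 hsat⟩
  have := Nat.pow_le_pow_right (by norm_num : 0 < 3) (show φ.depth ≤ k by omega)
  have := Nat.one_le_pow k 3 (by norm_num)
  exact Or.inr ⟨by omega, by omega, by omega⟩

theorem getElem?_abRep (n i : ℕ) :
    (abRep n)[i]? = if i < 2 * n then some (decide (Even i)) else none := by
  induction n generalizing i with
  | zero => simp [abRep]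
  | succ n ih =>
    match i with
    | 0 => simp [abRep]
    | 1 => rw [if_pos (by omega)]; simp [abRep]
    | j + 2 =>
      simp only [abRep, List.getElem?_cons_succ, ih, Nat.even_add, even_two, iff_true]
      exact if_congr (by omega) rfl rfl

theorem length_abRep (n : ℕ) : (abRep n).length = 2 * n := by
  induction n with
  | zero => rfl
  | succ n ih => simp only [abRep, List.length_cons, ih]; ring

theorem ofList_abRep (n : ℕ) : Word.ofList (abRep n) = Wab.take (2 * n) :=
  funext fun i => getElem?_abRep n i

theorem ofList_abRep_append_true (n : ℕ) :
    Word.ofList (abRep n ++ [true]) = Wab.take (2 * n + 1) := by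
  funext i
  simp only [Word.ofList, Word.take, Wab, Word.ofFun, List.getElem?_append,
    List.getElem?_singleton, getElem?_abRep, length_abRep]
  rcases lt_trichotomy i (2 * n) with hi | rfl | hi
  · simp [hi, show i < 2 * n + 1 by omega]
  · simp
  · simp [show ¬i < 2 * n by omega, show ¬i < 2 * n + 1 by omega, show i - 2 * n ≠ 0 by omega]

/-- `∃ x̄, b(x̄) ∧ ∃ y < x̄, a(y) ∧ ¬∃ z < x̄, y < z`: the predecessor of `x̄` carries `a`. -/
def PSen.consec {A : Type} (a b : A) : PSen A :=
  .exB (.and (.letter b 0) (.exlt (.and (.letter a 1) (.not (.exlt (.lt 1 2))))))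

theorem PSen.depth_consec {A : Type} (a b : A) : (PSen.consec a b).depth = 3 := rfl

theorem PSen.sat_consec_iff {A : Type} (a b : A) (w : List A) :
    PSen.Sat (Word.ofList w) (PSen.consec a b) ↔
      ∃ i : ℕ, w[i]? = some a ∧ w[i + 1]? = some b := by
  change (∃ m, w[m]? ≠ none ∧ w[m]? = some b ∧ ∃ y, w[y]? ≠ none ∧ y < m ∧ w[y]? = some a ∧
    ¬∃ z, w[z]? ≠ none ∧ z < m ∧ y < z) ↔ _
  simp only [ne_eq, getElem?_eq_none_iff, not_le, not_exists, not_and, not_lt]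
  constructor
  · rintro ⟨m, hm, hb, y, -, hym, ha, hy_max⟩
    obtain rfl : m = y + 1 := by
      by_contra hne
      have := hy_max (y + 1) (by omega) (by omega)
      omega
    exact ⟨y, ha, hb⟩
  · rintro ⟨i, ha, hb⟩
    have hlen := (List.getElem?_eq_some_iff.1 hb).1
    exact ⟨i + 1, hlen, hb, i, by omega, by omega, ha, fun x _ hx => by omega⟩

theorem tp_abRep_append_true_eq {k n : ℕ} (hn : 3 ^ k ≤ n) :
    tp k (Word.ofList (abRep n ++ [true])) = tp k (Word.ofList (abRep (n + 1))) := by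
  rw [ofList_abRep_append_true, ofList_abRep, mul_add_one]
  exact tp_eq_of_prefEquiv (prefEquiv_take_Wab hn)

theorem tp_three_append_true_ne (n : ℕ) :
    tp 3 (Word.ofList ((abRep n ++ [true]) ++ [true])) ≠
      tp 3 (Word.ofList (abRep (n + 1) ++ [true])) := by
  have hu : PSen.consec true true ∈ tp 3 (Word.ofList ((abRep n ++ [true]) ++ [true])) := by
    refine ⟨(PSen.depth_consec _ _).le, (PSen.sat_consec_iff _ _ _).2 ⟨2 * n, ?_, ?_⟩⟩
    · simp [length_abRep]
    · simp [length_abRep]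
  have hv : PSen.consec true true ∉ tp 3 (Word.ofList (abRep (n + 1) ++ [true])) := by
    rintro ⟨-, hsat⟩
    obtain ⟨i, hi, hi'⟩ := (PSen.sat_consec_iff _ _ _).1 hsat
    change Word.ofList _ i = _ at hi
    change Word.ofList _ (i + 1) = _ at hi'
    simp only [ofList_abRep_append_true, Word.take, Wab, Word.ofFun,
      Option.ite_none_right_eq_some, Option.some.injEq, decide_eq_true_eq] at hi hi'
    exact Nat.even_add_one.1 hi'.2 hi.2
  exact fun h => hv (h ▸ hu)

/-- Having the same prefFO `k`-type is not a congruence for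
concatenation: for every `k` there are words `u`, `v` with `tp_k(u) = tp_k(v)`
but `tp_3(u·a) ≠ tp_3(v·a)`.  Concretely, for `n` large enough with respect to
`k`, `u = (ab)^n·a` and `v = (ab)^{n+1}` satisfy `tp_k(u) = tp_k(v)`, while
`u·a` contains two consecutive `a`'s and `v·a` does not, a property expressible
by a prefFO sentence of quantifier depth `3`. -/
theorem tp_not_congruence (k : ℕ) :
    (∃ N : ℕ, ∀ n : ℕ, N ≤ n →
      tp k (Word.ofList (abRep n ++ [true])) = tp k (Word.ofList (abRep (n + 1))) ∧
      tp 3 (Word.ofList ((abRep n ++ [true]) ++ [true])) ≠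
        tp 3 (Word.ofList (abRep (n + 1) ++ [true]))) ∧
    (∃ u v : List Bool, tp k (Word.ofList u) = tp k (Word.ofList v) ∧
      tp 3 (Word.ofList (u ++ [true])) ≠ tp 3 (Word.ofList (v ++ [true]))) ∧
    (∃ s : PSen Bool, PSen.depth s = 3 ∧ ∀ w : List Bool,
      (PSen.Sat (Word.ofList w) s ↔
        ∃ i : ℕ, w[i]? = some true ∧ w[i + 1]? = some true)) :=
  ⟨⟨3 ^ k, fun n hn => ⟨tp_abRep_append_true_eq hn, tp_three_append_true_ne n⟩⟩,
    ⟨_, _, tp_abRep_append_true_eq le_rfl, tp_three_append_true_ne (3 ^ k)⟩,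
    ⟨PSen.consec true true, PSen.depth_consec true true, PSen.sat_consec_iff true true⟩⟩

end PrefSynth
end
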